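/- Let H be a real Hilbert space, A : H → H a continuous linear map, b ∈ H, and α > 0. If ν minimizes ½‖Aν − b‖² + α·N(ν) over H for a norm-like convex function N, and r = b − Aν is the residual, then r solves the dual problem: r maximizes ⟨r̃, b⟩ − ½‖r̃‖² subject to N*(A*r̃) ≤ α being satisfied (i.e., A*r̃ lies in the polar constraint set), where N* denotes the support/indicator structure of the conjugate of αN. -/

import Mathlib

/-!
The residual `r₀ = b - A ν` satisfies the first-order optimality condition
`⟪r₀, A (w - ν)⟫ ≤ α (N w - N ν)` for all `w`. Taking `w = ν + u` gives dual feasibility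
`⟪A* r₀, u⟫ ≤ α N u`, and taking `w = 0` gives `α N ν ≤ ⟪r₀, A ν⟫`. For any dual feasible `r`,
`⟪r, b⟫ = ⟪r, r₀⟫ + ⟪A* r, ν⟫ ≤ ⟪r, r₀⟫ + ⟪r₀, A ν⟫`, and completing the square
`⟪r, r₀⟫ - ½‖r‖² ≤ ½‖r₀‖²` gives the dual objective value of `r₀` as an upper bound. For the
ℓ¹ norm, `⟪v, u⟫ ≤ α ‖u‖₁` for all `u` is exactly `‖v‖_∞ ≤ α`.
-/

open scoped RealInnerProductSpace
open Filter Set Topology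

section Residual

variable {E F : Type*} [AddCommGroup E] [Module ℝ E]
  [NormedAddCommGroup F] [InnerProductSpace ℝ F] {A : E →ₗ[ℝ] F} {b : F}

/-- Perturbing a minimizer `ν` along `ν + t • (w - ν)` and letting `t → 0⁺`: the quadratic term
contributes `-t ⟪b - A ν, A (w - ν)⟫ + O(t²)`, the convex term at most `t (g w - g ν)`. -/
theorem inner_residual_map_sub_le_sub {g : E → ℝ} (hg : ConvexOn ℝ univ g) {ν : E}
    (hmin : ∀ w, (1/2) * ‖A ν - b‖^2 + g ν ≤ (1/2) * ‖A w - b‖^2 + g w) (w : E) :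
    ⟪b - A ν, A (w - ν)⟫ ≤ g w - g ν := by
  set c := ⟪b - A ν, A (w - ν)⟫
  set K := (1/2) * ‖A (w - ν)‖^2 with hK
  have hstep : ∀ t ∈ Ioo (0:ℝ) 1, c ≤ g w - g ν + t * K := by
    rintro t ⟨ht0, ht1⟩
    have hconv : g (ν + t • (w - ν)) ≤ (1 - t) * g ν + t * g w := by
      have hpt : ν + t • (w - ν) = (1 - t) • ν + t • w := by module
      rw [hpt]
      simpa only [smul_eq_mul] using
        hg.2 (mem_univ ν) (mem_univ w) (by linarith : 0 ≤ 1 - t) ht0.le (by ring)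
    have hnorm : ‖A (ν + t • (w - ν)) - b‖^2
        = ‖A ν - b‖^2 - 2 * t * c + t^2 * ‖A (w - ν)‖^2 := by
      rw [map_add, map_smul, add_sub_right_comm, norm_add_sq_real, real_inner_smul_right,
        norm_smul, Real.norm_of_nonneg ht0.le, ← neg_sub b, inner_neg_left]
      ring
    have hperturb := hmin (ν + t • (w - ν))
    rw [hnorm] at hperturb
    have hscaled : t * c ≤ t * (g w - g ν + t * K) := by rw [hK]; linarith
    exact le_of_mul_le_mul_left hscaled ht0
  have hlim : Tendsto (fun t => g w - g ν + t * K) (𝓝[>] 0) (𝓝 (g w - g ν)) := by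
    have : Tendsto (fun t : ℝ => g w - g ν + t * K) (𝓝 0) (𝓝 (g w - g ν + 0 * K)) :=
      (continuous_const.add (continuous_id.mul continuous_const)).tendsto 0
    simpa using this.mono_left nhdsWithin_le_nhds
  exact ge_of_tendsto hlim (mem_of_superset (Ioo_mem_nhdsGT one_pos) hstep)

variable {N : Seminorm ℝ E} {α : ℝ} {ν : E}

theorem inner_residual_map_le_mul_seminorm (hα : 0 ≤ α)
    (hmin : ∀ w, (1/2) * ‖A ν - b‖^2 + α * N ν ≤ (1/2) * ‖A w - b‖^2 + α * N w) (u : E) :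
    ⟪b - A ν, A u⟫ ≤ α * N u := by
  have hvar := inner_residual_map_sub_le_sub (N.convexOn.smul hα) hmin (ν + u)
  rw [add_sub_cancel_left] at hvar
  have htri := mul_le_mul_of_nonneg_left (map_add_le_add N ν u) hα
  simp only [smul_eq_mul] at hvar
  linarith

theorem mul_seminorm_le_inner_residual_map (hα : 0 ≤ α)
    (hmin : ∀ w, (1/2) * ‖A ν - b‖^2 + α * N ν ≤ (1/2) * ‖A w - b‖^2 + α * N w) :
    α * N ν ≤ ⟪b - A ν, A ν⟫ := by
  have hvar := inner_residual_map_sub_le_sub (N.convexOn.smul hα) hmin 0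
  simp only [zero_sub, map_neg, inner_neg_right, map_zero, smul_eq_mul, mul_zero] at hvar
  linarith

theorem inner_sub_half_sq_le_residual (hα : 0 ≤ α)
    (hmin : ∀ w, (1/2) * ‖A ν - b‖^2 + α * N ν ≤ (1/2) * ‖A w - b‖^2 + α * N w)
    {r : F} (hr : ∀ u, ⟪r, A u⟫ ≤ α * N u) :
    ⟪r, b⟫ - (1/2) * ‖r‖^2 ≤ ⟪b - A ν, b⟫ - (1/2) * ‖b - A ν‖^2 := by
  have hslack := mul_seminorm_le_inner_residual_map hα hmin
  have hsplit : ∀ s : F, ⟪s, b⟫ = ⟪s, b - A ν⟫ + ⟪s, A ν⟫ := fun s => by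
    rw [← inner_add_right, sub_add_cancel]
  have hsq := norm_sub_sq_real r (b - A ν)
  rw [hsplit r, hsplit (b - A ν), real_inner_self_eq_norm_sq]
  nlinarith [hr ν, sq_nonneg ‖r - (b - A ν)‖]

end Residual

section L1

variable {ι : Type*} [Fintype ι]

noncomputable def l1Seminorm : Seminorm ℝ (EuclideanSpace ℝ ι) :=
  Seminorm.of (fun w => ∑ i, |w i|)
    (fun x y => by
      simp only [PiLp.add_apply, ← Finset.sum_add_distrib]
      exact Finset.sum_le_sum fun i _ => abs_add_le _ _)
    (fun a x => by simp [abs_mul, Finset.mul_sum])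

@[simp]
theorem l1Seminorm_apply (w : EuclideanSpace ℝ ι) : l1Seminorm w = ∑ i, |w i| := rfl

theorem forall_inner_le_mul_l1Seminorm_iff {v : EuclideanSpace ℝ ι} {α : ℝ} :
    (∀ u, ⟪v, u⟫ ≤ α * l1Seminorm u) ↔ ∀ i, |v i| ≤ α := by
  classical
  constructor
  · intro h i
    have hpos := h (EuclideanSpace.single i 1)
    have hneg := h (EuclideanSpace.single i (-1))
    simp only [EuclideanSpace.inner_single_right, Real.ringHom_apply, l1Seminorm_apply,
      PiLp.single_apply, apply_ite abs, abs_one, abs_neg, abs_zero, Finset.sum_ite_eq',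
      Finset.mem_univ, ↓reduceIte, one_mul, neg_mul, mul_one] at hpos hneg
    exact abs_le.2 ⟨by linarith, hpos⟩
  · intro h u
    rw [PiLp.inner_apply, l1Seminorm_apply, Finset.mul_sum]
    refine Finset.sum_le_sum fun i _ => ?_
    calc ⟪v i, u i⟫ = u i * v i := rfl
      _ ≤ |v i| * |u i| := by rw [mul_comm, ← abs_mul]; exact le_abs_self _
      _ ≤ α * |u i| := mul_le_mul_of_nonneg_right (h i) (abs_nonneg _)

end L1

/-- LASSO duality on H = ℝⁿ: if ν minimizes ½‖Aν − b‖² + α‖ν‖₁, then the residual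
r = b − Aν is feasible for the dual problem (‖A*r‖_∞ ≤ α) and maximizes
⟨r̃, b⟩ − ½‖r̃‖² over all dual-feasible r̃. -/
theorem lasso_dual_residual
    {n : ℕ} (A : EuclideanSpace ℝ (Fin n) →L[ℝ] EuclideanSpace ℝ (Fin n))
    (b : EuclideanSpace ℝ (Fin n)) (α : ℝ) (hα : 0 < α)
    (ν : EuclideanSpace ℝ (Fin n))
    (hmin : ∀ w : EuclideanSpace ℝ (Fin n),
      (1/2) * ‖A ν - b‖^2 + α * ∑ i, |ν i|
        ≤ (1/2) * ‖A w - b‖^2 + α * ∑ i, |w i|) :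
    (∀ i, |ContinuousLinearMap.adjoint A (b - A ν) i| ≤ α) ∧
    ∀ r : EuclideanSpace ℝ (Fin n),
      (∀ i, |ContinuousLinearMap.adjoint A r i| ≤ α) →
        ⟪r, b⟫ - (1/2) * ‖r‖^2 ≤ ⟪b - A ν, b⟫ - (1/2) * ‖b - A ν‖^2 := by
  have hmin' : ∀ w, (1/2) * ‖A.toLinearMap ν - b‖^2 + α * l1Seminorm ν
      ≤ (1/2) * ‖A.toLinearMap w - b‖^2 + α * l1Seminorm w := by
    simpa only [ContinuousLinearMap.coe_coe, l1Seminorm_apply] using hmin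
  have hfeasible : ∀ r, (∀ i, |ContinuousLinearMap.adjoint A r i| ≤ α) ↔
      ∀ u, ⟪r, A.toLinearMap u⟫ ≤ α * l1Seminorm u := fun r => by
    simp only [← forall_inner_le_mul_l1Seminorm_iff, ContinuousLinearMap.adjoint_inner_left,
      ContinuousLinearMap.coe_coe]
  exact ⟨(hfeasible _).2 (inner_residual_map_le_mul_seminorm hα.le hmin'),
    fun r hr => inner_sub_half_sq_le_residual hα.le hmin' ((hfeasible r).1 hr)⟩
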